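/- arXiv:1508.07337 — 3 statements merged into one kernel-verified Lean document; each statement's English description precedes it below -/
import Mathlib

section
/- Let G be a directed graph. For every maximal collection 𝒞 of pairwise edge-disjoint directed cycles in G, let L_𝒞 = {p : E(G) → ℂ | p(x) = 0 for every edge x not contained in any cycle of 𝒞, and p(x) = p(y) whenever the edges x and y belong to the same cycle of 𝒞}, a ℂ-linear subspace of ℂ^{E(G)}. Then Z(G) equals the union of the subspaces L_𝒞 over all maximal collections 𝒞 of pairwise edge-disjoint directed cycles in G. -/
open MvPolynomial

/-- The `l`-th elementary symmetric polynomial in the finite set `s` of variables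
(`1` for `l = 0`, `0` for `l > |s|`). -/
noncomputable def esymmOf (R : Type) [CommRing R] {E : Type} (s : Finset E) (l : ℕ) :
    MvPolynomial E R :=
  ∑ t ∈ s.powersetCard l, ∏ x ∈ t, X x

/-- The incidence ideal of the directed graph with edge-endpoint maps `src`, `tgt`:
the ideal generated by the incidence relations
`δ_{v,l} = e_l(edges out of v) - e_l(edges into v)` for all vertices `v` and all `l ≥ 1`
(for `l > k_v` the relation `δ_{v,l}` is the zero polynomial, so this ideal is generated by
the `δ_{v,l}` with `1 ≤ l ≤ k_v`). -/
noncomputable def incidenceIdeal (R : Type) [CommRing R] {V E : Type}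
    [Fintype E] [DecidableEq V] (src tgt : E → V) : Ideal (MvPolynomial E R) :=
  Ideal.span {f | ∃ (v : V) (l : ℕ), 1 ≤ l ∧
    f = esymmOf R (Finset.univ.filter fun x => src x = v) l
      - esymmOf R (Finset.univ.filter fun x => tgt x = v) l}

/-- The affine zero locus in `ℂ^E` of an ideal of `ℤ[E]`. -/
def zeroLocus {E : Type} (I : Ideal (MvPolynomial E ℤ)) : Set (E → ℂ) :=
  {p | ∀ f ∈ I, MvPolynomial.aeval p f = 0}

/-- A directed cycle in the directed graph with edge-endpoint maps `src`, `tgt`: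
pairwise distinct vertices `v_0, …, v_n` and edges `x_0, …, x_n` with `x_i` going
from `v_i` to `v_{i+1}` (indices mod `n+1`). -/
structure DirCycle {V E : Type} (src tgt : E → V) where
  n : ℕ
  vtx : ZMod (n + 1) → V
  edge : ZMod (n + 1) → E
  vtx_inj : Function.Injective vtx
  edge_src : ∀ i, src (edge i) = vtx i
  edge_tgt : ∀ i, tgt (edge i) = vtx (i + 1)

/-- `C` is the set of edges of a directed cycle.  (A directed cycle, considered up to
cyclic permutation, is uniquely determined by its set of edges.) -/
def IsCycle {V E : Type} (src tgt : E → V) (C : Set E) : Prop :=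
  ∃ c : DirCycle src tgt, C = Set.range c.edge

/-- A collection of pairwise edge-disjoint directed cycles (given by their edge sets). -/
def IsDisjointCollection {V E : Type} (src tgt : E → V) (𝒞 : Set (Set E)) : Prop :=
  (∀ C ∈ 𝒞, IsCycle src tgt C) ∧ 𝒞.Pairwise Disjoint

/-- A maximal collection of pairwise edge-disjoint directed cycles. -/
def IsMaximalCollection {V E : Type} (src tgt : E → V) (𝒞 : Set (Set E)) : Prop :=
  IsDisjointCollection src tgt 𝒞 ∧
    ∀ 𝒟, IsDisjointCollection src tgt 𝒟 → 𝒞 ⊆ 𝒟 → 𝒟 = 𝒞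

/-- The linear subspace `L_𝒞` of `ℂ^E` attached to a collection `𝒞` of edge-disjoint
directed cycles: `p x = 0` for edges `x` on no cycle of `𝒞`, and `p x = p y` for edges
`x`, `y` on the same cycle of `𝒞`. -/
def cycleSubspace {E : Type} (𝒞 : Set (Set E)) : Set (E → ℂ) :=
  {p | (∀ x : E, (∀ C ∈ 𝒞, x ∉ C) → p x = 0) ∧
    ∀ C ∈ 𝒞, ∀ x ∈ C, ∀ y ∈ C, p x = p y}

/-!
A point `p` lies in `Z(G)` iff at every vertex the nonzero values of `p` on the outgoing edges
and on the incoming edges form the same multiset: zeros do not affect `e_l` for `l ≥ 1`, and a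
multiset of nonzero complex numbers is determined by its elementary symmetric functions (its size
is the largest `l` with `e_l ≠ 0`, and it is the root multiset of `∏ (X - a)`). Equivalently, every level set `p⁻¹{c}`, `c ≠ 0`, is a
balanced edge set, i.e. one with equal in- and out-degrees at each vertex. A balanced edge set
is an edge-disjoint union of directed cycles (follow edges until a vertex repeats, remove the
cycle found, and repeat). The cycles of all level sets form a disjoint collection on whose cycles
`p` is constant; any maximal collection containing it adds only cycles on which `p` vanishes.
Conversely, on `L_𝒞` each level set `p⁻¹{c}`, `c ≠ 0`, is a union of cycles of `𝒞`, hence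
balanced.
-/

namespace Multiset

variable {R : Type*}

lemma esymm_cons_zero [CommSemiring R] (s : Multiset R) {l : ℕ} (hl : l ≠ 0) :
    (0 ::ₘ s).esymm l = s.esymm l := by
  obtain ⟨l, rfl⟩ := Nat.exists_eq_succ_of_ne_zero hl
  simp [esymm, powersetCard_cons]

lemma esymm_replicate_zero_add [CommSemiring R] (k : ℕ) (s : Multiset R) {l : ℕ}
    (hl : l ≠ 0) : (replicate k 0 + s).esymm l = s.esymm l := by
  induction k with
  | zero => simp
  | succ k ih => rw [replicate_succ, cons_add, esymm_cons_zero _ hl, ih]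

lemma esymm_filter_ne_zero [CommSemiring R] [DecidableEq R] (s : Multiset R) {l : ℕ}
    (hl : l ≠ 0) : (s.filter (· ≠ 0)).esymm l = s.esymm l := by
  conv_rhs => rw [← filter_add_not (· = 0) s, filter_eq', esymm_replicate_zero_add _ _ hl]

lemma esymm_card [CommSemiring R] (s : Multiset R) : s.esymm (card s) = s.prod := by
  simp [esymm, powersetCard_self]

lemma esymm_of_card_lt [CommSemiring R] (s : Multiset R) {l : ℕ} (hl : card s < l) :
    s.esymm l = 0 := by
  simp [esymm, powersetCard_eq_empty _ hl]

lemma card_le_of_esymm_eq [CommRing R] [IsDomain R] {s t : Multiset R} (hs : 0 ∉ s)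
    (h : ∀ l ≠ 0, s.esymm l = t.esymm l) : card s ≤ card t := by
  by_contra! hlt
  have hprod : s.prod ≠ 0 := prod_ne_zero hs
  rw [← esymm_card, h _ (by omega), esymm_of_card_lt _ hlt] at hprod
  exact hprod rfl

lemma eq_of_esymm_eq [CommRing R] [IsDomain R] {s t : Multiset R} (hs : 0 ∉ s) (ht : 0 ∉ t)
    (h : ∀ l ≠ 0, s.esymm l = t.esymm l) : s = t := by
  have hcard : card s = card t :=
    (card_le_of_esymm_eq hs h).antisymm (card_le_of_esymm_eq ht fun l hl => (h l hl).symm)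
  have hesymm : s.esymm = t.esymm := by
    ext (_ | l)
    · simp [esymm, powersetCard_zero_left]
    · exact h _ l.succ_ne_zero
  rw [← Polynomial.roots_multiset_prod_X_sub_C s, ← Polynomial.roots_multiset_prod_X_sub_C t,
    prod_X_sub_X_eq_sum_esymm, prod_X_sub_X_eq_sum_esymm, hcard, hesymm]

lemma filter_ne_zero_eq_iff_esymm_eq [CommRing R] [IsDomain R] [DecidableEq R]
    {s t : Multiset R} :
    s.filter (· ≠ 0) = t.filter (· ≠ 0) ↔ ∀ l ≠ 0, s.esymm l = t.esymm l := by
  refine ⟨fun h l hl => ?_, fun h => eq_of_esymm_eq ?_ ?_ fun l hl => ?_⟩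
  · rw [← esymm_filter_ne_zero s hl, h, esymm_filter_ne_zero t hl]
  · simp
  · simp
  · rw [esymm_filter_ne_zero s hl, esymm_filter_ne_zero t hl, h l hl]

lemma filter_ne_zero_eq_iff_count_eq [Zero R] [DecidableEq R] {s t : Multiset R} :
    s.filter (· ≠ 0) = t.filter (· ≠ 0) ↔ ∀ c ≠ 0, s.count c = t.count c := by
  rw [Multiset.ext]
  refine forall_congr' fun c => ?_
  by_cases hc : c = 0 <;> simp [hc]

end Multiset

section Balanced

variable {V E : Type} {src tgt : E → V}

def IsBalanced (src tgt : E → V) (S : Set E) : Prop :=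
  ∀ v, (S ∩ src ⁻¹' {v}).ncard = (S ∩ tgt ⁻¹' {v}).ncard

variable [Finite E] {S T : Set E}

lemma IsBalanced.union (hST : Disjoint S T) (hS : IsBalanced src tgt S)
    (hT : IsBalanced src tgt T) : IsBalanced src tgt (S ∪ T) := by
  intro v
  rw [Set.union_inter_distrib_right, Set.union_inter_distrib_right,
    Set.ncard_union_eq (hST.mono Set.inter_subset_left Set.inter_subset_left),
    Set.ncard_union_eq (hST.mono Set.inter_subset_left Set.inter_subset_left), hS v, hT v]

lemma IsBalanced.diff (hTS : T ⊆ S) (hS : IsBalanced src tgt S)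
    (hT : IsBalanced src tgt T) : IsBalanced src tgt (S \ T) := by
  intro v
  have distrib (A : Set E) : S \ T ∩ A = (S ∩ A) \ (T ∩ A) := inf_sdiff_distrib_right S T A
  rw [distrib, distrib,
    Set.ncard_sdiff (Set.inter_subset_inter_left _ hTS),
    Set.ncard_sdiff (Set.inter_subset_inter_left _ hTS), hS v, hT v]

lemma IsBalanced.sUnion {𝒞 : Set (Set E)} (hdisj : 𝒞.Pairwise Disjoint)
    (h : ∀ C ∈ 𝒞, IsBalanced src tgt C) : IsBalanced src tgt (⋃₀ 𝒞) := by
  induction 𝒞, 𝒞.toFinite using Set.Finite.induction_on with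
  | empty => simp [IsBalanced]
  | @insert C 𝒞 hC _ ih =>
    rw [Set.sUnion_insert]
    refine (h C (Set.mem_insert _ _)).union ?_
      (ih (hdisj.mono (Set.subset_insert _ _)) fun D hD => h D (Set.mem_insert_of_mem _ hD))
    exact Set.disjoint_sUnion_right.2 fun D hD =>
      hdisj (Set.mem_insert _ _) (Set.mem_insert_of_mem _ hD) (ne_of_mem_of_not_mem hD hC).symm

lemma IsBalanced.exists_src_eq_tgt (hS : IsBalanced src tgt S) {x : E} (hx : x ∈ S) :
    ∃ y ∈ S, src y = tgt x := by
  have : (S ∩ tgt ⁻¹' {tgt x}).Nonempty := ⟨x, hx, rfl⟩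
  rw [← Set.ncard_pos, ← hS, Set.ncard_pos] at this
  exact this

end Balanced

section Cycles

variable {V E : Type} {src tgt : E → V}

lemma DirCycle.edge_injective (c : DirCycle src tgt) : Function.Injective c.edge :=
  fun i j h => c.vtx_inj (by rw [← c.edge_src, ← c.edge_src, h])

lemma IsCycle.nonempty {C : Set E} (h : IsCycle src tgt C) : C.Nonempty := by
  obtain ⟨c, rfl⟩ := h
  exact Set.range_nonempty _

lemma IsCycle.isBalanced {C : Set E} (h : IsCycle src tgt C) : IsBalanced src tgt C := by
  obtain ⟨c, rfl⟩ := h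
  intro v
  have hsrc : Set.range c.edge ∩ src ⁻¹' {v} = c.edge '' {i | c.vtx i = v} := by
    ext x
    constructor
    · rintro ⟨⟨i, rfl⟩, hv⟩
      exact ⟨i, (c.edge_src i).symm.trans hv, rfl⟩
    · rintro ⟨i, hv, rfl⟩
      exact ⟨⟨i, rfl⟩, (c.edge_src i).trans hv⟩
  have htgt : Set.range c.edge ∩ tgt ⁻¹' {v} = (fun i => c.edge (i - 1)) '' {i | c.vtx i = v} := by
    ext x
    constructor
    · rintro ⟨⟨i, rfl⟩, hv⟩
      exact ⟨i + 1, (c.edge_tgt i).symm.trans hv, by simp only [add_sub_cancel_right]⟩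
    · rintro ⟨i, hv, rfl⟩
      exact ⟨⟨_, rfl⟩, (c.edge_tgt _).trans (by rwa [sub_add_cancel])⟩
  rw [hsrc, htgt, Set.ncard_image_of_injective _ c.edge_injective,
    Set.ncard_image_of_injective _ fun i j h => sub_left_injective (c.edge_injective h)]

lemma exists_dirCycle_of_closed_walk (f : ℕ → E) (n : ℕ)
    (hwalk : ∀ m < n, src (f (m + 1)) = tgt (f m)) (hclosed : tgt (f n) = src (f 0))
    (hinj : Set.InjOn (src ∘ f) (Set.Iic n)) :
    ∃ c : DirCycle src tgt, ∀ i, c.edge i = f i.val := by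
  have hle (i : ZMod (n + 1)) : i.val ≤ n := Nat.lt_succ_iff.1 (ZMod.val_lt i)
  refine ⟨⟨n, fun i => src (f i.val), fun i => f i.val, ?_, fun _ => rfl, ?_⟩, fun _ => rfl⟩
  · exact fun i j h => ZMod.val_injective _ (hinj (hle i) (hle j) h)
  · intro i
    have hval : (i + 1).val = (i.val + 1) % (n + 1) := by
      rw [ZMod.val_add, ZMod.val_one_eq_one_mod, Nat.add_mod_mod]
    rcases (hle i).lt_or_eq with h | h
    · rw [hval, Nat.mod_eq_of_lt (by omega)]
      exact (hwalk _ h).symm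
    · rw [hval, h, Nat.mod_self]
      exact hclosed

lemma exists_isCycle_subset_range [Finite E] (f : ℕ → E)
    (hf : ∀ m, src (f (m + 1)) = tgt (f m)) : ∃ C, IsCycle src tgt C ∧ C ⊆ Set.range f := by
  classical
  have hrep : ∃ d a, src (f a) = src (f (a + d + 1)) := by
    obtain ⟨i, j, hij, h⟩ := Finite.exists_ne_map_eq_of_infinite f
    rcases hij.lt_or_gt with hlt | hlt
    · exact ⟨j - i - 1, i, by rw [show i + (j - i - 1) + 1 = j by omega, h]⟩
    · exact ⟨i - j - 1, j, by rw [show j + (i - j - 1) + 1 = i by omega, h]⟩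
  obtain ⟨a, ha⟩ := Nat.find_spec hrep
  -- the vertices of a shortest closed segment of the walk are pairwise distinct
  have hinj : Set.InjOn (src ∘ fun m => f (a + m)) (Set.Iic (Nat.find hrep)) := by
    intro i hi j hj h
    by_contra hne
    wlog hlt : i < j generalizing i j
    · exact this hj hi h.symm (Ne.symm hne) (by omega)
    refine Nat.find_min hrep (m := j - i - 1) (by simp only [Set.mem_Iic] at hj; omega)
      ⟨a + i, ?_⟩
    rwa [show a + i + (j - i - 1) + 1 = a + j by omega]
  obtain ⟨c, hc⟩ := exists_dirCycle_of_closed_walk (fun m => f (a + m)) (Nat.find hrep)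
    (fun m _ => hf (a + m)) ((hf _).symm.trans ha.symm) hinj
  exact ⟨_, ⟨c, rfl⟩, Set.range_subset_iff.2 fun i => ⟨_, (hc i).symm⟩⟩

lemma IsBalanced.exists_isCycle_subset [Finite E] {S : Set E} (hS : IsBalanced src tgt S)
    (hne : S.Nonempty) : ∃ C, IsCycle src tgt C ∧ C ⊆ S := by
  choose! next hnextS hnext using fun x (hx : x ∈ S) => hS.exists_src_eq_tgt hx
  obtain ⟨x₀, hx₀⟩ := hne
  have hfS (m : ℕ) : next^[m] x₀ ∈ S := by
    induction m with
    | zero => exact hx₀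
    | succ m ih => rw [Function.iterate_succ_apply']; exact hnextS _ ih
  obtain ⟨C, hC, hCf⟩ := exists_isCycle_subset_range (fun m => next^[m] x₀) fun m => by
    rw [Function.iterate_succ_apply']; exact hnext _ (hfS m)
  exact ⟨C, hC, hCf.trans (Set.range_subset_iff.2 hfS)⟩

lemma IsBalanced.exists_isDisjointCollection_sUnion_eq [Finite E] {S : Set E}
    (hS : IsBalanced src tgt S) : ∃ 𝒞, IsDisjointCollection src tgt 𝒞 ∧ ⋃₀ 𝒞 = S := by
  induction S using WellFoundedLT.induction with
  | _ S ih =>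
  rcases S.eq_empty_or_nonempty with rfl | hne
  · exact ⟨∅, ⟨by simp, Set.pairwise_empty _⟩, Set.sUnion_empty⟩
  obtain ⟨C, hC, hCS⟩ := hS.exists_isCycle_subset hne
  obtain ⟨𝒞, ⟨h𝒞cyc, h𝒞disj⟩, h𝒞S⟩ :=
    ih (S \ C) (hCS.sdiff_ssubset_of_nonempty hC.nonempty) (hS.diff hCS hC.isBalanced)
  refine ⟨insert C 𝒞, ⟨?_, ?_⟩, ?_⟩
  · rintro D (rfl | hD)
    exacts [hC, h𝒞cyc D hD]
  · refine h𝒞disj.insert_of_symm fun D hD _ => ?_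
    exact Set.disjoint_sdiff_right.mono_right (h𝒞S ▸ Set.subset_sUnion_of_mem hD)
  · rw [Set.sUnion_insert, h𝒞S, Set.union_sdiff_cancel hCS]

end Cycles

section Collections

variable {V E : Type} {src tgt : E → V}

lemma isMaximalCollection_iff {𝒞 : Set (Set E)} :
    IsMaximalCollection src tgt 𝒞 ↔ Maximal (IsDisjointCollection src tgt) 𝒞 :=
  and_congr_right fun _ => forall₂_congr fun _ _ =>
    ⟨fun h h𝒞𝒟 => (h h𝒞𝒟).le, fun h h𝒞𝒟 => (h h𝒞𝒟).antisymm h𝒞𝒟⟩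

lemma IsDisjointCollection.exists_isMaximalCollection_superset [Finite E] {𝒞 : Set (Set E)}
    (h𝒞 : IsDisjointCollection src tgt 𝒞) : ∃ 𝒟, IsMaximalCollection src tgt 𝒟 ∧ 𝒞 ⊆ 𝒟 := by
  obtain ⟨𝒟, h𝒞𝒟, h𝒟⟩ := Finite.exists_le_maximal h𝒞
  exact ⟨𝒟, isMaximalCollection_iff.2 h𝒟, h𝒞𝒟⟩

lemma cycleSubspace_mono {𝒞 𝒟 : Set (Set E)} (h𝒞𝒟 : 𝒞 ⊆ 𝒟) (h𝒟 : 𝒟.Pairwise Disjoint) :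
    cycleSubspace 𝒞 ⊆ cycleSubspace 𝒟 := by
  rintro p ⟨hzero, hconst⟩
  refine ⟨fun x hx => hzero x fun C hC => hx C (h𝒞𝒟 hC), fun D hD => ?_⟩
  by_cases hD𝒞 : D ∈ 𝒞
  · exact hconst D hD𝒞
  · have hDzero : ∀ x ∈ D, p x = 0 := fun x hxD => hzero x fun C hC hxC =>
      Set.disjoint_left.1 (h𝒟 hD (h𝒞𝒟 hC) (ne_of_mem_of_not_mem hC hD𝒞).symm) hxD hxC
    intro x hx y hy
    rw [hDzero x hx, hDzero y hy]

lemma IsDisjointCollection.isBalanced_preimage [Finite E] {𝒞 : Set (Set E)}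
    (h𝒞 : IsDisjointCollection src tgt 𝒞) {p : E → ℂ} (hp : p ∈ cycleSubspace 𝒞) {c : ℂ}
    (hc : c ≠ 0) : IsBalanced src tgt (p ⁻¹' {c}) := by
  have hunion : p ⁻¹' {c} = ⋃₀ {C ∈ 𝒞 | ∃ x ∈ C, p x = c} := by
    ext x
    constructor
    · intro hx
      by_contra hcov
      exact hc (hx.symm.trans (hp.1 x fun C hC hxC => hcov ⟨C, ⟨hC, x, hxC, hx⟩, hxC⟩))
    · rintro ⟨C, ⟨hC, y, hyC, hy⟩, hxC⟩
      exact (hp.2 C hC x hxC y hyC).trans hy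
  rw [hunion]
  exact IsBalanced.sUnion (h𝒞.2.mono (Set.sep_subset _ _))
    fun C hC => (h𝒞.1 C hC.1).isBalanced

lemma exists_isDisjointCollection_of_isBalanced_preimage [Finite E] {p : E → ℂ}
    (hp : ∀ c ≠ 0, IsBalanced src tgt (p ⁻¹' {c})) :
    ∃ 𝒞, IsDisjointCollection src tgt 𝒞 ∧ p ∈ cycleSubspace 𝒞 := by
  choose! F hF hFp using fun c (hc : c ≠ 0) => (hp c hc).exists_isDisjointCollection_sUnion_eq
  have hsub {c : ℂ} (hc : c ≠ 0) {C : Set E} (hC : C ∈ F c) : C ⊆ p ⁻¹' {c} :=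
    hFp c hc ▸ Set.subset_sUnion_of_mem hC
  refine ⟨{C | ∃ c ≠ 0, C ∈ F c}, ⟨?_, ?_⟩, ?_, ?_⟩
  · rintro C ⟨c, hc, hC⟩
    exact (hF c hc).1 C hC
  · rintro C ⟨c, hc, hC⟩ D ⟨d, hd, hD⟩ hCD
    obtain rfl | hcd := eq_or_ne c d
    · exact (hF c hc).2 hC hD hCD
    · exact ((Set.disjoint_singleton.2 hcd).preimage p).mono (hsub hc hC) (hsub hd hD)
  · intro x hx
    by_contra hpx
    obtain ⟨C, hC, hxC⟩ : x ∈ ⋃₀ F (p x) := (hFp _ hpx).symm ▸ rfl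
    exact hx C ⟨p x, hpx, hC⟩ hxC
  · rintro C ⟨c, hc, hC⟩ x hx y hy
    exact (hsub hc hC hx).trans (hsub hc hC hy).symm

end Collections

section ZeroLocus

variable {V E : Type}

lemma mem_zeroLocus_span {S : Set (MvPolynomial E ℤ)} {p : E → ℂ} :
    p ∈ zeroLocus (Ideal.span S) ↔ ∀ f ∈ S, aeval p f = 0 :=
  ⟨fun h f hf => h f (Ideal.subset_span hf),
    fun h _ hf => Ideal.span_le (I := RingHom.ker (aeval p)).2 h hf⟩

lemma aeval_esymmOf {R A : Type} [CommRing R] [CommRing A] [Algebra R A] (p : E → A)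
    (s : Finset E) (l : ℕ) : aeval p (esymmOf R s l) = (s.val.map p).esymm l := by
  simp [esymmOf, Finset.esymm_map_val]

lemma count_map_val_filter {β : Type} [DecidableEq V] [DecidableEq β] [Fintype E]
    (q : E → V) (v : V) (p : E → β) (c : β) :
    ((Finset.univ.filter fun x => q x = v).val.map p).count c = (p ⁻¹' {c} ∩ q ⁻¹' {v}).ncard := by
  rw [Multiset.count_map, ← Finset.filter_val]
  change (Finset.filter _ _).card = _
  rw [← Set.ncard_coe_finset]
  congr 1
  ext x
  simp [and_comm, eq_comm]

lemma mem_zeroLocus_incidenceIdeal_iff [Fintype E] [DecidableEq V] {src tgt : E → V}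
    {p : E → ℂ} :
    p ∈ zeroLocus (incidenceIdeal ℤ src tgt) ↔ ∀ c ≠ 0, IsBalanced src tgt (p ⁻¹' {c}) := by
  rw [incidenceIdeal, mem_zeroLocus_span]
  simp only [Set.mem_ofPred_eq, forall_exists_index, and_imp]
  rw [forall_comm]
  simp only [forall_comm (α := MvPolynomial E ℤ), forall_eq, map_sub, aeval_esymmOf, sub_eq_zero,
    Nat.one_le_iff_ne_zero, ← Multiset.filter_ne_zero_eq_iff_esymm_eq,
    Multiset.filter_ne_zero_eq_iff_count_eq, count_map_val_filter]
  exact ⟨fun h c hc v => h v c hc, fun h v c hc => h c hc v⟩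

end ZeroLocus

theorem stmt2_general {V E : Type} [Fintype E] [DecidableEq V]
    (src tgt : E → V) :
    zeroLocus (incidenceIdeal ℤ src tgt) =
      ⋃ 𝒞 ∈ {𝒞 | IsMaximalCollection src tgt 𝒞}, cycleSubspace 𝒞 := by
  ext p
  simp only [Set.mem_iUnion₂]
  constructor
  · intro hp
    obtain ⟨𝒞, h𝒞, hp𝒞⟩ :=
      exists_isDisjointCollection_of_isBalanced_preimage (mem_zeroLocus_incidenceIdeal_iff.1 hp)
    obtain ⟨𝒟, h𝒟, h𝒞𝒟⟩ := h𝒞.exists_isMaximalCollection_superset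
    exact ⟨𝒟, h𝒟, cycleSubspace_mono h𝒞𝒟 h𝒟.1.2 hp𝒞⟩
  · rintro ⟨𝒞, h𝒞, hp⟩
    exact mem_zeroLocus_incidenceIdeal_iff.2 fun c hc => h𝒞.1.isBalanced_preimage hp hc

theorem stmt2 {V E : Type} [Fintype V] [Fintype E] [DecidableEq V] [DecidableEq E]
    (src tgt : E → V) :
    zeroLocus (incidenceIdeal ℤ src tgt) =
      ⋃ 𝒞 ∈ {𝒞 | IsMaximalCollection src tgt 𝒞}, cycleSubspace 𝒞 :=
  stmt2_general src tgt
end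

section
/- Let G be a directed graph. Let N be the subgroup of the free abelian group ℤ^{E(G)} on the edge set generated by the vectors δ_{v,1} = (sum of the standard basis vectors of the edges with initial vertex v) − (sum of the standard basis vectors of the edges with terminal vertex v), for v ∈ V(G), and let M = ℤ^{E(G)}/N (this is the degree-1 homogeneous component of ℤ[E(G)]/I(G)). Then: (1) G contains an undirected cycle if and only if M ≠ 0; (2) α_undirected(G) ≤ rank M ≤ β_undirected(G), where rank M = dim_ℚ(ℚ ⊗_ℤ M). -/
open MvPolynomial

/-- An undirected cycle in the directed graph with edge-endpoint maps `src`, `tgt`: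
pairwise distinct vertices `v_0, …, v_n` and pairwise distinct edges `x_0, …, x_n`
such that `x_i` joins `v_i` and `v_{i+1}` with either orientation (indices mod `n+1`). -/
structure UndirCycle {V E : Type} (src tgt : E → V) where
  n : ℕ
  vtx : ZMod (n + 1) → V
  edge : ZMod (n + 1) → E
  vtx_inj : Function.Injective vtx
  edge_inj : Function.Injective edge
  edge_ends : ∀ i, (src (edge i) = vtx i ∧ tgt (edge i) = vtx (i + 1)) ∨
    (src (edge i) = vtx (i + 1) ∧ tgt (edge i) = vtx i)

/-- The degree-one incidence vector `δ_{v,1} ∈ ℤ^E` of a vertex `v`: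
(sum of the basis vectors of edges with initial vertex `v`) minus
(sum of the basis vectors of edges with terminal vertex `v`).
The contributions of a loop at `v` cancel. -/
def deltaVec {V E : Type} [DecidableEq V] (src tgt : E → V) (v : V) : E → ℤ :=
  fun x => (if src x = v then 1 else 0) - (if tgt x = v then 1 else 0)

/-- `α_undirected(G)`: the maximal number of pairwise edge-disjoint undirected cycles. -/
noncomputable def uCyclePacking {V E : Type} (src tgt : E → V) : ℕ :=
  sSup {k | ∃ f : Fin k → UndirCycle src tgt,
    ∀ i j, i ≠ j → Disjoint (Set.range (f i).edge) (Set.range (f j).edge)}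

/-- `β_undirected(G)`: the minimal number of edges whose removal destroys all
undirected cycles. -/
noncomputable def uCyclomatic {V E : Type} [Fintype E] (src tgt : E → V) : ℕ :=
  sInf {k | ∃ S : Finset E, S.card = k ∧
    ∀ c : UndirCycle src tgt, ∃ x ∈ S, x ∈ Set.range c.edge}

open TensorProduct

/-!
A cycle `c` defines a functional on `ℤ^E`, the signed sum of the coordinates along `c`, which
vanishes on every `δ_v` and is `±1` on each edge of `c`. So `M ≠ 0` as soon as there is a cycle,
and evaluating the functionals of `k` edge-disjoint cycles on one edge of each of them exhibits `k`
independent vectors in `ℚ ⊗ M`.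

Conversely, let `S` meet every cycle. The edges outside `S` then form a forest, and an endpoint `w`
of a longest path in it is a leaf, with pendant edge `x` say. Then
`e_x = ±(δ_w - ∑_{s ∈ S} δ_w(s) e_s)`, so after adding `x` to `S` we conclude by induction that
the classes of the `e_s`, `s ∈ S`, generate `M`. This gives `rank M ≤ β`, and for `S = ∅` it
gives `M = 0` when there is no cycle.
-/

open Function Set

lemma linearIndependent_of_dual_diagonal {R W ι : Type*} [CommRing R] [NoZeroDivisors R]
    [AddCommGroup W] [Module R W] (w : ι → W) (φ : ι → W →ₗ[R] R)
    (hdiag : ∀ i, φ i (w i) ≠ 0) (hoff : ∀ i j, i ≠ j → φ i (w j) = 0) :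
    LinearIndependent R w := by
  classical
  refine linearIndependent_iff'.mpr fun s g hg i hi => ?_
  have h := congrArg (φ i) hg
  simp only [map_sum, map_smul, smul_eq_mul, map_zero] at h
  rw [Finset.sum_eq_single_of_mem i hi fun j _ hji => by rw [hoff i j hji.symm, mul_zero]] at h
  exact (mul_eq_zero.mp h).resolve_right (hdiag i)

lemma finrank_baseChange_le_of_span_eq_top {R A M ι : Type*} [CommRing R] [Field A] [Algebra R A]
    [AddCommGroup M] [Module R M] [Fintype ι] {v : ι → M}
    (hv : Submodule.span R (range v) = ⊤) :
    Module.finrank A (A ⊗[R] M) ≤ Fintype.card ι := by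
  refine finrank_le_of_span_eq_top (v := TensorProduct.mk R A M 1 ∘ v) ?_
  rw [range_comp, ← Submodule.baseChange_span, hv, Submodule.baseChange_top]

section Graph

variable {V E : Type} (src tgt : E → V)

def Joins (x : E) (u v : V) : Prop :=
  (src x = u ∧ tgt x = v) ∨ (src x = v ∧ tgt x = u)

variable {src tgt}

lemma Joins.symm {x : E} {u v : V} (h : Joins src tgt x u v) : Joins src tgt x v u :=
  Or.symm h

lemma Joins.eq_or_eq {x : E} {u v u' v' : V} (h : Joins src tgt x u v)
    (h' : Joins src tgt x u' v') : u = u' ∨ u = v' := by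
  unfold Joins at h h'; grind

lemma exists_joins_of_touches {x : E} {w : V} (h : src x = w ∨ tgt x = w) :
    ∃ u, Joins src tgt x w u := by
  rcases h with h | h
  · exact ⟨tgt x, .inl ⟨h, rfl⟩⟩
  · exact ⟨src x, .inr ⟨rfl, h⟩⟩

variable (src tgt) in
structure UndirPath (m : ℕ) where
  vtx : Fin (m + 1) → V
  edge : Fin m → E
  vtx_inj : Injective vtx
  edge_inj : Injective edge
  joins : ∀ i, Joins src tgt (edge i) (vtx i.castSucc) (vtx i.succ)

namespace UndirPath

variable (src tgt) in
def nil (v : V) : UndirPath src tgt 0 where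
  vtx _ := v
  edge := finZeroElim
  vtx_inj := fun _ _ _ => Subsingleton.elim (α := Fin 1) _ _
  edge_inj := fun i => i.elim0
  joins := fun i => i.elim0

variable {m : ℕ}

def cons (p : UndirPath src tgt m) (y : E) (u : V) (hy : y ∉ range p.edge)
    (hu : u ∉ range p.vtx) (hyu : Joins src tgt y u (p.vtx 0)) : UndirPath src tgt (m + 1) where
  vtx := Fin.cons u p.vtx
  edge := Fin.cons y p.edge
  vtx_inj := Fin.cons_injective_iff.mpr ⟨hu, p.vtx_inj⟩
  edge_inj := Fin.cons_injective_iff.mpr ⟨hy, p.edge_inj⟩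
  joins := Fin.cases hyu fun i => by simpa [← Fin.succ_castSucc] using p.joins i

def take (p : UndirPath src tgt m) (j : ℕ) (hj : j ≤ m) : UndirPath src tgt j where
  vtx := p.vtx ∘ Fin.castLE (by omega)
  edge := p.edge ∘ Fin.castLE hj
  vtx_inj := p.vtx_inj.comp (Fin.castLE_injective _)
  edge_inj := p.edge_inj.comp (Fin.castLE_injective _)
  joins i := p.joins (Fin.castLE hj i)

lemma length_lt_card [Finite V] (p : UndirPath src tgt m) : m < Nat.card V := by
  simpa using Nat.card_le_card_of_injective p.vtx p.vtx_inj

lemma range_take_edge_subset (p : UndirPath src tgt m) (j : ℕ) (hj : j ≤ m) :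
    range (p.take j hj).edge ⊆ range p.edge :=
  range_comp_subset_range (Fin.castLE hj) p.edge

-- `ZMod (m + 1)` is `Fin (m + 1)` by definition, so the cycle reuses the vertices of `p`.
def closeCycle (p : UndirPath src tgt m) (y : E) (hy : y ∉ range p.edge)
    (hyp : Joins src tgt y (p.vtx (Fin.last m)) (p.vtx 0)) : UndirCycle src tgt where
  n := m
  vtx := p.vtx
  edge := Fin.snoc (α := fun _ => E) p.edge y
  vtx_inj := p.vtx_inj
  edge_inj := Fin.snoc_injective_iff.mpr ⟨p.edge_inj, hy⟩
  edge_ends := by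
    refine Fin.lastCases ?_ fun i => ?_
    · change Joins src tgt _ _ _
      convert hyp using 2
      · exact Fin.snoc_last (α := fun _ => E) _ _
      · exact congrArg p.vtx (Fin.last_add_one m)
    · change Joins src tgt _ _ _
      convert p.joins i using 2
      · exact Fin.snoc_castSucc (α := fun _ => E) _ _ _
      · exact congrArg p.vtx Fin.coeSucc_eq_succ

end UndirPath

variable (src tgt) in
def UndirCycle.map {E' : Type} (f : E' → E) (hf : Injective f)
    (c : UndirCycle (src ∘ f) (tgt ∘ f)) : UndirCycle src tgt where
  n := c.n
  vtx := c.vtx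
  edge := f ∘ c.edge
  vtx_inj := c.vtx_inj
  edge_inj := hf.comp c.edge_inj
  edge_ends := c.edge_ends

lemma src_ne_tgt_of_isEmpty_undirCycle (hG : IsEmpty (UndirCycle src tgt)) (x : E) :
    src x ≠ tgt x := fun h =>
  hG.false <|
    (UndirPath.nil src tgt (src x)).closeCycle x (fun ⟨i, _⟩ => i.elim0) (.inl ⟨rfl, h.symm⟩)

lemma UndirPath.eq_edge_zero_of_touches (hG : IsEmpty (UndirCycle src tgt)) {m : ℕ}
    (p : UndirPath src tgt (m + 1)) (hmax : IsEmpty (UndirPath src tgt (m + 2))) {y : E}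
    (hy : src y = p.vtx 0 ∨ tgt y = p.vtx 0) : y = p.edge 0 := by
  by_contra hne
  obtain ⟨u, hyu⟩ := exists_joins_of_touches hy
  have hy_edge : y ∉ range p.edge := by
    rintro ⟨i, rfl⟩
    rcases hyu.eq_or_eq (p.joins i) with h | h
    · exact hne (congrArg p.edge (Fin.castSucc_eq_zero_iff.mp (p.vtx_inj h).symm))
    · exact Fin.succ_ne_zero i (p.vtx_inj h).symm
  by_cases hu : u ∈ range p.vtx
  · obtain ⟨k, rfl⟩ := hu
    exact hG.false ((p.take k k.is_le).closeCycle y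
      (fun h => hy_edge (p.range_take_edge_subset _ _ h)) hyu.symm)
  · exact hmax.false (p.cons y u hy_edge hu hyu.symm)

theorem exists_leaf_of_isEmpty_undirCycle [Finite V] (hG : IsEmpty (UndirCycle src tgt)) (x₀ : E) :
    ∃ x w u, w ≠ u ∧ Joins src tgt x w u ∧ ∀ y, (src y = w ∨ tgt y = w) → y = x := by
  classical
  let P m := Nonempty (UndirPath src tgt (m + 1))
  have hP₀ : P 0 := ⟨(UndirPath.nil src tgt (tgt x₀)).cons x₀ (src x₀) (fun ⟨i, _⟩ => i.elim0)
    (fun ⟨_, h⟩ => src_ne_tgt_of_isEmpty_undirCycle hG x₀ h.symm) (.inl ⟨rfl, rfl⟩)⟩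
  let m := Nat.findGreatest P (Nat.card V)
  obtain ⟨p⟩ : P m := Nat.findGreatest_spec (Nat.zero_le _) hP₀
  have hmax : IsEmpty (UndirPath src tgt (m + 2)) := by
    refine ⟨fun q => Nat.findGreatest_is_greatest (Nat.lt_succ_self m) ?_ ⟨q⟩⟩
    have := q.length_lt_card
    omega
  exact ⟨p.edge 0, p.vtx 0, p.vtx (Fin.succ 0), fun h => Fin.succ_ne_zero 0 (p.vtx_inj h).symm,
    p.joins 0, fun y hy => p.eq_edge_zero_of_touches hG hmax hy⟩

section Incidence

variable [DecidableEq V]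

lemma deltaVec_eq_zero_of_not_touches {x : E} {w : V} (h : ¬(src x = w ∨ tgt x = w)) :
    deltaVec src tgt w x = 0 := by
  simp_all [deltaVec]

lemma deltaVec_mul_self_of_joins {x : E} {w u : V} (hwu : w ≠ u) (h : Joins src tgt x w u) :
    deltaVec src tgt w x * deltaVec src tgt w x = 1 := by
  rcases h with ⟨hs, ht⟩ | ⟨hs, ht⟩ <;> simp [deltaVec, hs, ht, hwu.symm]

variable (src tgt) in
abbrev deltaSpan : Submodule ℤ (E → ℤ) := Submodule.span ℤ (range (deltaVec src tgt))

variable [Finite E] [DecidableEq E]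

lemma single_mem_deltaSpan_sup_spanSubset {S : Set E} {x : E} {w u : V} (hwu : w ≠ u)
    (hx : Joins src tgt x w u) (hleaf : ∀ y ∉ S, (src y = w ∨ tgt y = w) → y = x) :
    Pi.single x 1 ∈ deltaSpan src tgt ⊔ Pi.spanSubset ℤ S := by
  set d := deltaVec src tgt w x
  have hrest : deltaVec src tgt w - d • Pi.single x 1 ∈ Pi.spanSubset ℤ S := by
    refine Pi.mem_spanSubset_iff.mpr fun y hy => ?_
    by_cases hyx : y = x
    · simp [hyx, d]
    · simpa [hyx] using deltaVec_eq_zero_of_not_touches (mt (hleaf y hy) hyx)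
  have hdx : d • Pi.single x 1 ∈ deltaSpan src tgt ⊔ Pi.spanSubset ℤ S := by
    rw [← sub_sub_cancel (deltaVec src tgt w) (d • Pi.single x 1)]
    exact sub_mem (Submodule.mem_sup_left (Submodule.subset_span ⟨w, rfl⟩))
      (Submodule.mem_sup_right hrest)
  have hd : d • d • (Pi.single x 1 : E → ℤ) = Pi.single x 1 := by
    rw [smul_smul, deltaVec_mul_self_of_joins hwu hx, one_smul]
  exact hd ▸ Submodule.smul_mem _ d hdx

theorem deltaSpan_sup_spanSubset_eq_top [Finite V] (S : Finset E)
    (hS : ∀ c : UndirCycle src tgt, ∃ x ∈ S, x ∈ range c.edge) :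
    deltaSpan src tgt ⊔ Pi.spanSubset ℤ (S : Set E) = ⊤ := by
  have := Fintype.ofFinite E
  refine Finset.strongDownwardInduction (n := Fintype.card E)
    (p := fun S : Finset E => (∀ c : UndirCycle src tgt, ∃ x ∈ S, x ∈ range c.edge) →
      deltaSpan src tgt ⊔ Pi.spanSubset ℤ (S : Set E) = ⊤)
    (fun S ih _ hS => ?_) S S.card_le_univ hS
  by_cases hfull : ∀ y, y ∈ S
  · exact eq_top_iff.mpr fun v _ =>
      Submodule.mem_sup_right (Pi.mem_spanSubset_iff.mpr fun y hy => absurd (hfull y) hy)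
  obtain ⟨y₀, hy₀⟩ := not_forall.mp hfull
  have hG : IsEmpty (UndirCycle (src ∘ Subtype.val) (tgt ∘ Subtype.val : {x // x ∉ S} → V)) :=
    ⟨fun c => by
      obtain ⟨x, hxS, i, rfl⟩ := hS (c.map src tgt _ Subtype.val_injective)
      exact (c.edge i).2 hxS⟩
  obtain ⟨⟨x, hxS⟩, w, u, hwu, hx, hleaf⟩ := exists_leaf_of_isEmpty_undirCycle hG ⟨y₀, hy₀⟩
  have hx_mem : Pi.single x 1 ∈ deltaSpan src tgt ⊔ Pi.spanSubset ℤ (S : Set E) :=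
    single_mem_deltaSpan_sup_spanSubset hwu hx fun y hy hyw =>
      congrArg Subtype.val (hleaf ⟨y, hy⟩ hyw)
  have hinsert := ih (insert x S).card_le_univ (Finset.ssubset_insert hxS)
    fun c => (hS c).imp fun z ⟨hz, hzc⟩ => ⟨Finset.mem_insert_of_mem hz, hzc⟩
  rw [eq_top_iff, ← hinsert, Finset.coe_insert, Pi.spanSubset, Set.image_insert_eq,
    Submodule.span_insert, ← Pi.spanSubset, Pi.basisFun_apply]
  exact sup_le le_sup_left
    (sup_le (Submodule.span_singleton_le_iff_mem _ _ |>.mpr hx_mem) le_sup_right)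

lemma quotient_deltaSpan_subsingleton [Finite V] (hG : IsEmpty (UndirCycle src tgt)) :
    Subsingleton ((E → ℤ) ⧸ deltaSpan src tgt) := by
  have := deltaSpan_sup_spanSubset_eq_top (∅ : Finset E) fun c => hG.elim c
  rw [Finset.coe_empty, Pi.spanSubset, Set.image_empty, Submodule.span_empty, sup_bot_eq] at this
  exact Submodule.Quotient.subsingleton_iff.mpr this

end Incidence

namespace UndirCycle

variable [DecidableEq V] (c : UndirCycle src tgt)

def sign (i : ZMod (c.n + 1)) : ℤ :=
  if src (c.edge i) = c.vtx i then 1 else -1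

lemma sign_ne_zero (i : ZMod (c.n + 1)) : c.sign i ≠ 0 := by
  unfold sign; split <;> decide

lemma sign_mul_deltaVec (v : V) (i : ZMod (c.n + 1)) :
    c.sign i * deltaVec src tgt v (c.edge i) =
      (if c.vtx i = v then 1 else 0) - (if c.vtx (i + 1) = v then 1 else 0) := by
  rcases c.edge_ends i with ⟨hs, ht⟩ | ⟨hs, ht⟩
  · simp [sign, deltaVec, hs, ht]
  · by_cases hloop : c.vtx (i + 1) = c.vtx i
    · simp [sign, deltaVec, hs, ht, hloop]
    · simp only [sign, deltaVec, hs, ht, if_neg hloop]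
      ring

def circulation : (E → ℤ) →ₗ[ℤ] ℤ :=
  ∑ i, c.sign i • LinearMap.proj (c.edge i)

lemma circulation_apply (f : E → ℤ) : c.circulation f = ∑ i, c.sign i * f (c.edge i) := by
  simp [circulation]

lemma circulation_deltaVec (v : V) : c.circulation (deltaVec src tgt v) = 0 := by
  simp only [circulation_apply, sign_mul_deltaVec, Finset.sum_sub_distrib, sub_eq_zero]
  exact (Fintype.sum_equiv (Equiv.addRight 1) _ _ fun _ => rfl).symm

lemma deltaSpan_le_ker_circulation : deltaSpan src tgt ≤ LinearMap.ker c.circulation :=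
  Submodule.span_le.mpr <| range_subset_iff.mpr c.circulation_deltaVec

def circulationQuot : ((E → ℤ) ⧸ deltaSpan src tgt) →ₗ[ℤ] ℤ :=
  (deltaSpan src tgt).liftQ c.circulation c.deltaSpan_le_ker_circulation

lemma circulationQuot_mk (f : E → ℤ) :
    c.circulationQuot (Submodule.Quotient.mk f) = c.circulation f :=
  rfl

variable [DecidableEq E]

lemma circulation_single_edge (i : ZMod (c.n + 1)) :
    c.circulation (Pi.single (c.edge i) 1) = c.sign i := by
  rw [circulation_apply, Finset.sum_eq_single i (fun j _ hji => by
    simp [c.edge_inj.ne hji]) (by simp)]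
  simp

lemma circulation_single_of_notMem {x : E} (hx : x ∉ range c.edge) :
    c.circulation (Pi.single x 1) = 0 := by
  rw [circulation_apply]
  refine Finset.sum_eq_zero fun i _ => ?_
  rw [Pi.single_eq_of_ne (fun h => hx ⟨i, h⟩), mul_zero]

lemma mk_single_edge_ne_zero (i : ZMod (c.n + 1)) :
    (Submodule.Quotient.mk (Pi.single (c.edge i) 1) : (E → ℤ) ⧸ deltaSpan src tgt) ≠ 0 := by
  intro h
  have := congrArg c.circulationQuot h
  rw [circulationQuot_mk, circulation_single_edge, map_zero] at this
  exact c.sign_ne_zero i this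

end UndirCycle

variable (src tgt) in
lemma exists_finset_card_eq_uCyclomatic [Fintype E] : ∃ S : Finset E,
    S.card = uCyclomatic src tgt ∧ ∀ c : UndirCycle src tgt, ∃ x ∈ S, x ∈ range c.edge :=
  Nat.sInf_mem (s := {k | ∃ S : Finset E, S.card = k ∧
      ∀ c : UndirCycle src tgt, ∃ x ∈ S, x ∈ range c.edge})
    ⟨_, Finset.univ, rfl, fun c => ⟨c.edge 0, Finset.mem_univ _, 0, rfl⟩⟩

section Rank

variable [DecidableEq V] [DecidableEq E]

theorem nonempty_undirCycle_iff_nontrivial [Finite V] [Finite E] :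
    Nonempty (UndirCycle src tgt) ↔ Nontrivial ((E → ℤ) ⧸ deltaSpan src tgt) := by
  refine ⟨fun ⟨c⟩ => nontrivial_of_ne _ 0 (c.mk_single_edge_ne_zero 0), fun h => ?_⟩
  by_contra hG
  exact not_subsingleton _ (quotient_deltaSpan_subsingleton (not_nonempty_iff.mp hG))

theorem card_le_finrank_of_pairwise_disjoint [Finite E] {k : ℕ} (f : Fin k → UndirCycle src tgt)
    (hf : ∀ i j, i ≠ j → Disjoint (range (f i).edge) (range (f j).edge)) :
    k ≤ Module.finrank ℚ (ℚ ⊗[ℤ] ((E → ℤ) ⧸ deltaSpan src tgt)) := by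
  let w (j : Fin k) : ℚ ⊗[ℤ] ((E → ℤ) ⧸ deltaSpan src tgt) :=
    1 ⊗ₜ Submodule.Quotient.mk (Pi.single ((f j).edge 0) 1)
  let φ (i : Fin k) := LinearMap.liftBaseChange ℚ (Algebra.linearMap ℤ ℚ ∘ₗ (f i).circulationQuot)
  have hφ (i j : Fin k) : φ i (w j) = (f i).circulation (Pi.single ((f j).edge 0) 1) := by
    simp [φ, w, UndirCycle.circulationQuot_mk]
  have hw : LinearIndependent ℚ w := by
    refine linearIndependent_of_dual_diagonal w φ (fun i => ?_) (fun i j hij => ?_)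
    · rw [hφ, UndirCycle.circulation_single_edge]
      exact_mod_cast (f i).sign_ne_zero 0
    · rw [hφ, UndirCycle.circulation_single_of_notMem _ fun h =>
        Set.disjoint_left.mp (hf i j hij) h ⟨0, rfl⟩, Int.cast_zero]
  simpa using hw.fintype_card_le_finrank

theorem uCyclePacking_le_finrank [Finite E] :
    uCyclePacking src tgt ≤ Module.finrank ℚ (ℚ ⊗[ℤ] ((E → ℤ) ⧸ deltaSpan src tgt)) :=
  csSup_le ⟨0, finZeroElim, fun i => i.elim0⟩ fun _ ⟨f, hf⟩ =>
    card_le_finrank_of_pairwise_disjoint f hf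

theorem finrank_le_uCyclomatic [Finite V] [Fintype E] :
    Module.finrank ℚ (ℚ ⊗[ℤ] ((E → ℤ) ⧸ deltaSpan src tgt)) ≤ uCyclomatic src tgt := by
  obtain ⟨S, hS_card, hS⟩ := exists_finset_card_eq_uCyclomatic src tgt
  have hspan : Submodule.span ℤ (range fun s : S =>
      (Submodule.Quotient.mk (Pi.single (s : E) 1) : (E → ℤ) ⧸ deltaSpan src tgt)) = ⊤ := by
    rw [← (Submodule.map_mkQ_eq_top _ _).mpr (deltaSpan_sup_spanSubset_eq_top S hS), Pi.spanSubset,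
      Submodule.map_span, Set.image_image, Set.image_eq_range]
    simp only [Pi.basisFun_apply, Submodule.mkQ_apply, Finset.coe_sort_coe]
  simpa [hS_card] using finrank_baseChange_le_of_span_eq_top hspan

end Rank

end Graph

theorem stmt14 {V E : Type} [Fintype V] [Fintype E] [DecidableEq V] [DecidableEq E]
    (src tgt : E → V) :
    (Nonempty (UndirCycle src tgt) ↔
        Nontrivial ((E → ℤ) ⧸ Submodule.span ℤ (Set.range (deltaVec src tgt)))) ∧
      uCyclePacking src tgt ≤
        Module.finrank ℚ
          (ℚ ⊗[ℤ] ((E → ℤ) ⧸ Submodule.span ℤ (Set.range (deltaVec src tgt)))) ∧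
      Module.finrank ℚ
          (ℚ ⊗[ℤ] ((E → ℤ) ⧸ Submodule.span ℤ (Set.range (deltaVec src tgt)))) ≤
        uCyclomatic src tgt :=
  ⟨nonempty_undirCycle_iff_nontrivial, uCyclePacking_le_finrank, finrank_le_uCyclomatic⟩
end

section
/- Let G be an undirected graph with finite vertex set V(G) and finite edge set E(G), and let S be the ℤ₂-subspace of ℤ₂·E(G) spanned by the vectors Σ_{x ∈ E(v)∖L(v)} x for v ∈ V(G). For an edge x of G, there exists an undirected cycle in G containing x if and only if x ∉ S (where x is regarded as a basis vector of ℤ₂·E(G)). -/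
/-!
On an edge `ab`, loop or not, the vertex vector of `v` takes the value `[a = v] + [b = v]` in
`ℤ₂`. Hence summing coordinates along a cycle is a linear functional that kills every vertex
vector (each occurrence of a vertex is counted twice) but takes the value `1` on each edge of the
cycle. Conversely, if no cycle passes through `x = ab`, then `a` and `b` lie in different
components of `G - x`; summing the vertex vectors over the component `C` of `a` gives the
indicator of the cut `δ(C)`, which is `{x}`.
-/

open MvPolynomial

/-- An undirected cycle in the undirected graph with edge-endpoints map
`ends : E → Sym2 V`: pairwise distinct vertices `v_0, …, v_n` and pairwise distinct
edges `x_0, …, x_n` such that `x_i` joins `v_i` and `v_{i+1}` (indices mod `n+1`). -/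
structure UCycle {V E : Type} (ends : E → Sym2 V) where
  n : ℕ
  vtx : ZMod (n + 1) → V
  edge : ZMod (n + 1) → E
  vtx_inj : Function.Injective vtx
  edge_inj : Function.Injective edge
  edge_ends : ∀ i, ends (edge i) = s(vtx i, vtx (i + 1))

/-- The vector `Σ_{x ∈ E(v) \ L(v)} x` of `ℤ₂·E(G)`: the sum of the basis vectors of the
non-loop edges incident at `v`. -/
def vertexVec {V E : Type} [DecidableEq V] (ends : E → Sym2 V) (v : V) : E → ZMod 2 :=
  fun x => if v ∈ ends x ∧ ends x ≠ s(v, v) then 1 else 0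

section

variable {V E : Type} {ends : E → Sym2 V}

-- Uniform in loops and non-loops, since a loop at `a` contributes `1 + 1 = 0`.
lemma vertexVec_apply_of_ends_eq [DecidableEq V] {y : E} {a b : V} (hy : ends y = s(a, b))
    (v : V) : vertexVec ends v y = (if a = v then 1 else 0) + (if b = v then 1 else 0) := by
  by_cases ha : a = v <;> by_cases hb : b = v <;> subst_vars <;>
    simp [vertexVec, Sym2.mem_iff, eq_comm, CharTwo.add_self_eq_zero, *]

lemma sum_vertexVec_apply_of_ends_eq [DecidableEq V] (C : Finset V) {y : E} {a b : V}
    (hy : ends y = s(a, b)) :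
    (∑ v ∈ C, vertexVec ends v) y = (if a ∈ C then 1 else 0) + (if b ∈ C then 1 else 0) := by
  simp only [Finset.sum_apply, vertexVec_apply_of_ends_eq hy, Finset.sum_add_distrib,
    Finset.sum_ite_eq]

namespace UCycle

lemma sum_vertexVec_edge [DecidableEq V] (c : UCycle ends) (v : V) :
    ∑ i, vertexVec ends v (c.edge i) = 0 := by
  simp only [vertexVec_apply_of_ends_eq (c.edge_ends _), Finset.sum_add_distrib]
  rw [Fintype.sum_equiv (Equiv.addRight 1) (fun i => if c.vtx (i + 1) = v then 1 else 0)
    (fun i => if c.vtx i = v then 1 else 0) fun _ => rfl]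
  exact CharTwo.add_self_eq_zero _

def edgeSum (c : UCycle ends) : (E → ZMod 2) →ₗ[ZMod 2] ZMod 2 :=
  ∑ i, LinearMap.proj (c.edge i)

lemma edgeSum_apply (c : UCycle ends) (f : E → ZMod 2) : c.edgeSum f = ∑ i, f (c.edge i) := by
  simp [edgeSum]

lemma edgeSum_single [DecidableEq E] (c : UCycle ends) (i : ZMod (c.n + 1)) :
    c.edgeSum (Pi.single (c.edge i) 1) = 1 := by
  rw [edgeSum_apply, Finset.sum_eq_single_of_mem i (Finset.mem_univ i)]
  · simp
  · intro j _ hji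
    exact Pi.single_eq_of_ne (c.edge_inj.ne hji) _

lemma single_edge_notMem_span [DecidableEq V] [DecidableEq E] (c : UCycle ends)
    (i : ZMod (c.n + 1)) :
    Pi.single (c.edge i) (1 : ZMod 2) ∉ Submodule.span (ZMod 2) (Set.range (vertexVec ends)) := by
  have hle : Submodule.span (ZMod 2) (Set.range (vertexVec ends)) ≤ LinearMap.ker c.edgeSum := by
    rw [Submodule.span_le]
    rintro _ ⟨v, rfl⟩
    simp [edgeSum_apply, c.sum_vertexVec_edge v]
  intro hmem
  simpa [c.edgeSum_single i] using hle hmem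

def ofNatIndexed (m : ℕ) (f : ℕ → V) (g : ℕ → E) (hf : Set.InjOn f (Set.Iic m))
    (hg : Set.InjOn g (Set.Iic m)) (hends : ∀ i ≤ m, ends (g i) = s(f i, f ((i + 1) % (m + 1)))) :
    UCycle ends where
  n := m
  vtx i := f i.val
  edge i := g i.val
  vtx_inj i j h := ZMod.val_injective _ <|
    hf (Nat.lt_succ_iff.1 (ZMod.val_lt i)) (Nat.lt_succ_iff.1 (ZMod.val_lt j)) h
  edge_inj i j h := ZMod.val_injective _ <|
    hg (Nat.lt_succ_iff.1 (ZMod.val_lt i)) (Nat.lt_succ_iff.1 (ZMod.val_lt j)) h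
  edge_ends i := by
    rw [hends _ (Nat.lt_succ_iff.1 (ZMod.val_lt i)), ZMod.val_add, ZMod.val_one_eq_one_mod,
      Nat.add_mod_mod]

end UCycle

lemma SimpleGraph.Walk.IsPath.injOn_sym2_getVert {G : SimpleGraph V} {u v : V} {p : G.Walk u v}
    (hp : p.IsPath) :
    Set.InjOn (fun i => s(p.getVert i, p.getVert (i + 1))) {i | i < p.length} := by
  intro i (hi : i < p.length) j (hj : j < p.length) h
  have hinj {k l : ℕ} (hk : k ≤ p.length) (hl : l ≤ p.length) (hkl : p.getVert k = p.getVert l) :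
      k = l := hp.getVert_injOn hk hl hkl
  rcases Sym2.eq_iff.1 h with ⟨h1, -⟩ | ⟨h1, h2⟩
  · exact hinj hi.le hj.le h1
  · have := hinj hi.le hj h1
    have := hinj hi hj.le h2
    omega

-- Close a path from `b` to `a` in `G - x` with the edge `x`.
lemma exists_ucycle_of_reachable {x : E} {a b : V} (hx : ends x = s(a, b))
    (h : (SimpleGraph.fromEdgeSet (ends '' {x}ᶜ)).Reachable a b) :
    ∃ c : UCycle ends, x ∈ Set.range c.edge := by
  classical
  obtain ⟨q, hq⟩ := h.symm.some.toPath
  set m := q.length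
  have hstep (i : ℕ) (hi : i < m) : ∃ y ≠ x, ends y = s(q.getVert i, q.getVert (i + 1)) := by
    obtain ⟨⟨y, hy, hye⟩, -⟩ := (SimpleGraph.fromEdgeSet_adj _).1 (q.adj_getVert_succ hi)
    exact ⟨y, hy, hye⟩
  choose e he_ne he_ends using hstep
  let g (i : ℕ) : E := if h : i < m then e i h else x
  have hg_ends (i : ℕ) (hi : i ≤ m) :
      ends (g i) = s(q.getVert i, q.getVert ((i + 1) % (m + 1))) := by
    rcases hi.lt_or_eq with hi | rfl
    · simp [g, hi, he_ends, Nat.mod_eq_of_lt (Nat.succ_lt_succ hi)]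
    · simp [g, hx, m]
  have hg_inj : Set.InjOn g (Set.Iic m) := by
    intro i (hi : i ≤ m) j (hj : j ≤ m) h
    rcases hi.lt_or_eq with hi | rfl <;> rcases hj.lt_or_eq with hj | rfl
    · refine hq.injOn_sym2_getVert hi hj ?_
      simp only [g, hi, hj, dite_true] at h
      exact (he_ends i hi).symm.trans ((congrArg ends h).trans (he_ends j hj))
    · simp [g, hi] at h
      exact absurd h (he_ne i hi)
    · simp [g, hj] at h
      exact absurd h.symm (he_ne j hj)
    · rfl
  refine ⟨UCycle.ofNatIndexed m q.getVert g hq.getVert_injOn hg_inj hg_ends, m, ?_⟩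
  change g (m : ZMod (m + 1)).val = x
  simp [g]

lemma single_mem_span_vertexVec_of_not_reachable [Fintype V] [DecidableEq V] [DecidableEq E]
    {x : E} {a b : V} (hx : ends x = s(a, b))
    (h : ¬ (SimpleGraph.fromEdgeSet (ends '' {x}ᶜ)).Reachable a b) :
    Pi.single x (1 : ZMod 2) ∈ Submodule.span (ZMod 2) (Set.range (vertexVec ends)) := by
  classical
  set H := SimpleGraph.fromEdgeSet (ends '' {x}ᶜ)
  set C := Finset.univ.filter (H.Reachable a)
  have hcut : ∑ v ∈ C, vertexVec ends v = Pi.single x 1 := by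
    funext y
    obtain ⟨c, d, hy⟩ : ∃ c d, ends y = s(c, d) := Sym2.exists.1 ⟨_, rfl⟩
    rw [sum_vertexVec_apply_of_ends_eq C hy]
    by_cases hyx : y = x
    · subst hyx
      rcases Sym2.eq_iff.1 (hx.symm.trans hy) with ⟨rfl, rfl⟩ | ⟨rfl, rfl⟩ <;> simp [C, h]
    · have hcd : c ∈ C ↔ d ∈ C := by
        by_cases hcd : c = d
        · rw [hcd]
        have hadj : H.Adj c d := (SimpleGraph.fromEdgeSet_adj _).2 ⟨⟨y, hyx, hy⟩, hcd⟩
        simp only [C, Finset.mem_filter, Finset.mem_univ, true_and]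
        exact ⟨fun hc => hc.trans hadj.reachable, fun hd => hd.trans hadj.symm.reachable⟩
      simp [hcd, Pi.single_eq_of_ne hyx, CharTwo.add_self_eq_zero]
  rw [← hcut]
  exact Submodule.sum_mem _ fun v _ => Submodule.subset_span ⟨v, rfl⟩

end

theorem stmt17_general {V E : Type} [Fintype V] [DecidableEq V] [DecidableEq E]
    (ends : E → Sym2 V) (x : E) :
    (∃ c : UCycle ends, x ∈ Set.range c.edge) ↔
      Pi.single x (1 : ZMod 2) ∉ Submodule.span (ZMod 2) (Set.range (vertexVec ends)) := by
  refine ⟨fun ⟨c, i, hi⟩ => hi ▸ c.single_edge_notMem_span i, fun hx => ?_⟩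
  obtain ⟨a, b, hab⟩ : ∃ a b, ends x = s(a, b) := Sym2.exists.1 ⟨_, rfl⟩
  by_contra hc
  exact hx (single_mem_span_vertexVec_of_not_reachable hab fun h =>
    hc (exists_ucycle_of_reachable hab h))

theorem stmt17 {V E : Type} [Fintype V] [Fintype E] [DecidableEq V] [DecidableEq E]
    (ends : E → Sym2 V) (x : E) :
    (∃ c : UCycle ends, x ∈ Set.range c.edge) ↔
      Pi.single x (1 : ZMod 2) ∉ Submodule.span (ZMod 2) (Set.range (vertexVec ends)) :=
  stmt17_general ends x
end
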